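/- (Theorem 2.) Fix an integer n ≥ 1, σ > 0, α, τ ∈ (0,1) satisfying (C1) τ ≥ α and (C2) τ < 2Φ(−z_{α/2}/2) − α, and λ > 0 with √λ ≥ (z_{α/2} + z_{τ/2})σ/√n. Let c_1 > 0 be a solution of θ = √λ − z_{α/2}σ̃(θ)/√n, and set ν_0 = √λ and ν_3 = (z_{α/2} + z_{τ/2})σ/√n. Then the difference Δ(θ) = CR(θ) − CR_1(θ) satisfies: (a) Δ(θ) ≥ 1 − α/τ for every θ ∈ [0, min{ν_3, c_1}]; (b) Δ(θ) ≥ Φ(−z_{α/2}/2) − α/2 > 0 for every θ ∈ [min{ν_3, c_1}, ν_0]; and (c) Δ(θ) > −α/2 for every θ ∈ [ν_0, ∞). -/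

import Mathlib

/-!
Measured in units of `σ / √n`, each of `CR_a`, `CR_b` is, past its first branch,
`Φ(h) − Φ(clamp(ν − v, −h, h))` with `h` the scaled half-width. For the asymptotic interval this
is `g(v) = z_{α/2} v² / (v² + r²)`, an increasing function that stays below `z_{α/2}`, and below
`z_{α/2} / 2` up to `r`, the scaled `√λ`.

(a) Up to `c₁` the conditional coverage of the asymptotic interval vanishes, so `Δ` reduces to
`CR_b(θ, ν₁) / P_s(θ, ν₁)`, which is bounded using `P_s ≥ 2Φ(−z_{τ/2})` and the Gaussian shift
inequality `Φ(a − 2b) ≥ 2Φ(−b) − Φ(−a)`.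
(b), (c) Since `P_s(θ, ν₀) ≥ Φ(v − r)`, that conditional coverage is at most its numerator
divided by `Φ(v − r)`: at most `1 − 2Φ(−g) ≤ 1 − 2Φ(−z_{α/2}/2)` before `√λ`; beyond `√λ` it is
compared directly with the numerator of `CR`, using `P_s(θ, ν₁) < 1`.
-/

open MeasureTheory ProbabilityTheory

/-- The standard normal cumulative distribution function. -/
noncomputable def Phi (x : ℝ) : ℝ := (gaussianReal 0 1 (Set.Iic x)).toReal

/-- P_s(θ,ν) = Φ(√n(θ − ν)/σ) + Φ(√n(−θ − ν)/σ). -/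
noncomputable def Ps (n : ℕ) (σ θ ν : ℝ) : ℝ :=
  Phi (Real.sqrt n * (θ - ν) / σ) + Phi (Real.sqrt n * (-θ - ν) / σ)

/-- σ̃(θ) = (1 + λ/θ²)⁻¹ σ for θ ≠ 0, with the convention σ̃(0) = 0. -/
noncomputable def sigTilde (lam σ θ : ℝ) : ℝ :=
  if θ = 0 then 0 else (1 + lam / θ ^ 2)⁻¹ * σ

open Classical in
/-- The piecewise function CR_a(θ,ν); here `za` denotes the quantile z_{α/2}. -/
noncomputable def CRa (n : ℕ) (σ lam za θ ν : ℝ) : ℝ :=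
  if θ < |ν - za * sigTilde lam σ θ / Real.sqrt n| then
    (Ps n σ θ ν - 2 * Phi (-(za * sigTilde lam σ θ / σ))) *
      (if ν < za * sigTilde lam σ θ / Real.sqrt n then 1 else 0)
  else if θ ≤ ν + za * sigTilde lam σ θ / Real.sqrt n then
    Phi (za * sigTilde lam σ θ / σ) - Phi (Real.sqrt n * (ν - θ) / σ)
  else 1 - 2 * Phi (-(za * sigTilde lam σ θ / σ))

open Classical in
/-- The piecewise function CR_b(θ,ν); here `za` denotes the quantile z_{α/2}. -/
noncomputable def CRb (n : ℕ) (σ α za θ ν : ℝ) : ℝ :=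
  if θ < |ν - za * σ / Real.sqrt n| then
    (Ps n σ θ ν - α) * (if ν < za * σ / Real.sqrt n then 1 else 0)
  else if θ ≤ ν + za * σ / Real.sqrt n then
    1 - α / 2 - Phi (Real.sqrt n * (ν - θ) / σ)
  else 1 - α

/-- CR₁(θ) = CR_a(θ, ν₀)/P_s(θ, ν₀) with ν₀ = √λ: the conditional coverage
probability of the asymptotic-based confidence interval. -/
noncomputable def CR1 (n : ℕ) (σ lam za θ : ℝ) : ℝ :=
  CRa n σ lam za θ (Real.sqrt lam) / Ps n σ θ (Real.sqrt lam)

/-- CR(θ) = (CR_b(θ,ν₁) + CR_a(θ,ν₂) − CR_b(θ,ν₂))/P_s(θ,ν₁) with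
ν₁ = z_{τ/2}σ/√n and ν₂ = √λ + z_{α/2}σ/√n: the conditional coverage probability
of the two-step confidence interval. Here `za` = z_{α/2} and `zt` = z_{τ/2}. -/
noncomputable def CRtwo (n : ℕ) (σ lam α za zt θ : ℝ) : ℝ :=
  (CRb n σ α za θ (zt * σ / Real.sqrt n)
    + CRa n σ lam za θ (Real.sqrt lam + za * σ / Real.sqrt n)
    - CRb n σ α za θ (Real.sqrt lam + za * σ / Real.sqrt n))
  / Ps n σ θ (zt * σ / Real.sqrt n)

/-- Δ(θ) = CR(θ) − CR₁(θ). -/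
noncomputable def Delta (n : ℕ) (σ lam α za zt θ : ℝ) : ℝ :=
  CRtwo n σ lam α za zt θ - CR1 n σ lam za θ

open Set

lemma Phi_eq_cdf (x : ℝ) : Phi x = cdf (gaussianReal 0 1) x := by
  rw [cdf_eq_real]; rfl

lemma Phi_mono : Monotone Phi := by
  intro a b h; simp only [Phi_eq_cdf]; exact (cdf _).mono h

lemma Phi_nonneg (x : ℝ) : 0 ≤ Phi x := by rw [Phi_eq_cdf]; exact cdf_nonneg _ _

lemma Phi_le_one (x : ℝ) : Phi x ≤ 1 := by rw [Phi_eq_cdf]; exact cdf_le_one _ _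

lemma Phi_sub_Phi (a b : ℝ) : Phi b - Phi a = ∫ t in a..b, gaussianPDFReal 0 1 t := by
  have h (x : ℝ) : Phi x = ∫ t in Iic x, gaussianPDFReal 0 1 t := by
    rw [Phi, gaussianReal_apply_eq_integral 0 one_ne_zero,
      ENNReal.toReal_ofReal (integral_nonneg fun t => gaussianPDFReal_nonneg 0 1 t)]
  rw [h, h]
  exact intervalIntegral.integral_Iic_sub_Iic (integrable_gaussianPDFReal 0 1).integrableOn
    (integrable_gaussianPDFReal 0 1).integrableOn

lemma Phi_strictMono : StrictMono Phi := fun a b h => sub_pos.1 <| by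
  rw [Phi_sub_Phi]
  exact intervalIntegral.intervalIntegral_pos_of_pos
    (integrable_gaussianPDFReal 0 1).intervalIntegrable
    (fun x => gaussianPDFReal_pos 0 1 x one_ne_zero) h

lemma Phi_neg (x : ℝ) : Phi (-x) = 1 - Phi x := by
  have hx : gaussianReal 0 1 {x} = 0 :=
    gaussianReal_absolutelyContinuous 0 one_ne_zero (Real.volume_singleton)
  have hsymm : (gaussianReal 0 1).map (fun y => -y) = gaussianReal 0 1 := by
    simpa using gaussianReal_map_neg (μ := 0) (v := 1)
  calc Phi (-x) = ((gaussianReal 0 1).map (fun y => -y)).real (Iic (-x)) := by rw [hsymm]; rfl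
    _ = (gaussianReal 0 1).real (Ici x) := by
        rw [map_measureReal_apply measurable_neg measurableSet_Iic]
        congr 1; ext; simp
    _ = 1 - (gaussianReal 0 1).real (Iio x) := by
        rw [← compl_Iio, measureReal_compl measurableSet_Iio, probReal_univ]
    _ = 1 - Phi x := by rw [measureReal_congr (Iio_ae_eq_Iic' hx)]; rfl

lemma Phi_pos (x : ℝ) : 0 < Phi x :=
  (Phi_nonneg (x - 1)).trans_lt (Phi_strictMono (by linarith))

lemma Phi_zero : Phi 0 = 1 / 2 := by
  have h := Phi_neg 0
  rw [neg_zero] at h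
  linarith

lemma gaussianPDFReal_le_of_sq_le {x y : ℝ} (h : x ^ 2 ≤ y ^ 2) :
    gaussianPDFReal 0 1 y ≤ gaussianPDFReal 0 1 x := by
  simp only [gaussianPDFReal, sub_zero, NNReal.coe_one, mul_one]
  gcongr

/-- Each point `t` of `[l, u]` has `|t| ≤ |t + d|`, so the shifted interval carries less
mass under the unimodal symmetric density. -/
lemma Phi_add_sub_Phi_add_le {l u d : ℝ} (hd : 0 ≤ d) (hl : -(d / 2) ≤ l) (hlu : l ≤ u) :
    Phi (u + d) - Phi (l + d) ≤ Phi u - Phi l := by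
  rw [Phi_sub_Phi, Phi_sub_Phi,
    ← intervalIntegral.integral_comp_add_right (fun t => gaussianPDFReal 0 1 t) d]
  refine intervalIntegral.integral_mono_on hlu
    ((integrable_gaussianPDFReal 0 1).comp_add_right d).intervalIntegrable
    (integrable_gaussianPDFReal 0 1).intervalIntegrable fun t ht => ?_
  exact gaussianPDFReal_le_of_sq_le (by nlinarith [ht.1])

lemma two_mul_Phi_neg_sub_le {a b : ℝ} (hb : 0 ≤ b) (hba : b ≤ a) :
    2 * Phi (-b) - Phi (-a) ≤ Phi (a - 2 * b) := by
  have h := Phi_add_sub_Phi_add_le (l := -b) (u := a - 2 * b) (d := 2 * b)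
    (by linarith) (by linarith) (by linarith)
  rw [show a - 2 * b + 2 * b = a by ring, show -b + 2 * b = b by ring] at h
  linarith [Phi_neg a, Phi_neg b]

noncomputable def scaledPs (v ν : ℝ) : ℝ := Phi (v - ν) + Phi (-v - ν)

open Classical in
noncomputable def scaledCR (h ν v : ℝ) : ℝ :=
  if v < |ν - h| then (scaledPs v ν - 2 * Phi (-h)) * (if ν < h then 1 else 0)
  else if v ≤ ν + h then Phi h - Phi (ν - v)
  else 1 - 2 * Phi (-h)

/-- `Delta` in units of `σ / √n`: `v` is the scaled `θ`, `r` the scaled `ν₀ = √λ`, `a` and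
`b` stand for `z_{α/2}` and `z_{τ/2}`, and `g = z_{α/2} σ̃(θ) / σ` is the scaled half-width. -/
noncomputable def scaledDelta (a b r g v : ℝ) : ℝ :=
  (scaledCR a b v + scaledCR g (r + a) v - scaledCR a (r + a) v) / scaledPs v b
    - scaledCR g r v / scaledPs v r

noncomputable def clampedCR (h x : ℝ) : ℝ := Phi h - Phi (max (-h) (min x h))

noncomputable def halfWidth (a r v : ℝ) : ℝ := a * (v ^ 2 / (v ^ 2 + r ^ 2))

section scaled

variable {a g h r v ν : ℝ}

lemma scaledPs_pos : 0 < scaledPs v ν :=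
  add_pos_of_pos_of_nonneg (Phi_pos _) (Phi_nonneg _)

lemma scaledPs_le_one (hν : 0 ≤ ν) : scaledPs v ν ≤ 1 := by
  rw [scaledPs]
  linarith [Phi_mono (show -v - ν ≤ -(v - ν) by linarith), Phi_neg (v - ν)]

lemma scaledPs_lt_one (hν : 0 < ν) : scaledPs v ν < 1 := by
  rw [scaledPs]
  linarith [Phi_strictMono (show -v - ν < -(v - ν) by linarith), Phi_neg (v - ν)]

lemma two_mul_Phi_neg_le_scaledPs (hv : 0 ≤ v) (hν : 0 ≤ ν) :
    2 * Phi (-ν) ≤ scaledPs v ν := by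
  have h := Phi_add_sub_Phi_add_le (l := -ν) (u := v - ν) (d := 2 * ν)
    (by linarith) (by linarith) (by linarith)
  rw [show v - ν + 2 * ν = v + ν by ring, show -ν + 2 * ν = ν by ring] at h
  rw [scaledPs, show -v - ν = -(v + ν) by ring, Phi_neg (v + ν)]
  linarith [Phi_neg ν]

lemma scaledCR_of_lt_sub (hv : 0 ≤ v) (hvh : v < h - ν) :
    scaledCR h ν v = scaledPs v ν - 2 * Phi (-h) := by
  rw [scaledCR, if_pos (hvh.trans_le (abs_sub_comm h ν ▸ le_abs_self _)),
    if_pos (by linarith), mul_one]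

lemma scaledCR_of_sub_le (hh : 0 ≤ h) (hvh : h - ν ≤ v) :
    scaledCR h ν v = clampedCR h (ν - v) := by
  unfold scaledCR clampedCR
  split_ifs with h₁ h₂ h₃
  · exact absurd h₁ (not_lt.2 (by rw [abs_of_neg (by linarith)]; linarith))
  · rw [abs_of_nonneg (by linarith)] at h₁
    rw [min_eq_right (by linarith), max_eq_right (by linarith)]
    ring
  · have h₄ := (abs_le.1 (not_lt.1 h₁)).2
    rw [min_eq_left (by linarith), max_eq_right (by linarith)]
  · rw [min_eq_left (by linarith), max_eq_left (by linarith), Phi_neg]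
    ring

lemma scaledCR_eq_zero (hh : 0 ≤ h) (hv : 0 ≤ v) (hvh : v + h ≤ ν) :
    scaledCR h ν v = 0 := by
  rw [scaledCR_of_sub_le hh (by linarith), clampedCR, min_eq_right (by linarith),
    max_eq_right (by linarith), sub_self]

lemma clampedCR_nonneg (hh : 0 ≤ h) (x : ℝ) : 0 ≤ clampedCR h x :=
  sub_nonneg.2 (Phi_mono (max_le (by linarith) (min_le_right _ _)))

lemma halfWidth_nonneg (ha : 0 ≤ a) : 0 ≤ halfWidth a r v := by
  unfold halfWidth; positivity

lemma halfWidth_pos (ha : 0 < a) (hv : v ≠ 0) : 0 < halfWidth a r v := by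
  unfold halfWidth; positivity

lemma halfWidth_le (ha : 0 ≤ a) : halfWidth a r v ≤ a :=
  mul_le_of_le_one_right ha (div_le_one_of_le₀ (by nlinarith) (by positivity))

lemma halfWidth_le_half (ha : 0 ≤ a) (hv : 0 ≤ v) (hvr : v ≤ r) :
    halfWidth a r v ≤ a / 2 := by
  have h : v ^ 2 / (v ^ 2 + r ^ 2) ≤ 1 / 2 :=
    div_le_of_le_mul₀ (by positivity) (by norm_num) (by nlinarith)
  unfold halfWidth
  nlinarith

lemma halfWidth_monotoneOn (ha : 0 ≤ a) (hr : r ≠ 0) :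
    MonotoneOn (halfWidth a r) (Ici 0) := by
  intro v hv w hw hvw
  have hr2 : 0 < r ^ 2 := by positivity
  refine mul_le_mul_of_nonneg_left ?_ ha
  rw [div_le_div_iff₀ (by positivity) (by positivity)]
  nlinarith [mul_le_mul_of_nonneg_left (pow_le_pow_left₀ hv hvw 2) hr2.le]

lemma add_halfWidth_monotoneOn (ha : 0 ≤ a) (hr : r ≠ 0) :
    MonotoneOn (fun v => v + halfWidth a r v) (Ici 0) :=
  monotoneOn_id.add (halfWidth_monotoneOn ha hr)

end scaled

section bridge

variable {n : ℕ} {σ : ℝ}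

lemma Ps_eq_scaledPs (θ ν : ℝ) :
    Ps n σ θ ν = scaledPs (√n / σ * θ) (√n / σ * ν) := by
  simp only [Ps, scaledPs]
  congr 2 <;> ring

lemma CRa_eq_scaledCR (hn : 0 < n) (hσ : 0 < σ) (lam za θ ν : ℝ) :
    CRa n σ lam za θ ν =
      scaledCR (za * sigTilde lam σ θ / σ) (√n / σ * ν) (√n / σ * θ) := by
  have hk : 0 < √n / σ := div_pos (by positivity) hσ
  have e : √n / σ * (za * sigTilde lam σ θ / √n) = za * sigTilde lam σ θ / σ := by
    field_simp
  rw [← e]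
  simp only [CRa, scaledCR, ← mul_sub, ← mul_add, abs_mul, abs_of_pos hk,
    mul_lt_mul_iff_right₀ hk, mul_le_mul_iff_right₀ hk, Ps_eq_scaledPs]
  rw [e, div_mul_eq_mul_div (√(n : ℝ)) σ (ν - θ)]

lemma CRb_eq_scaledCR (hn : 0 < n) (hσ : 0 < σ) {α za : ℝ} (hza : Phi (-za) = α / 2)
    (θ ν : ℝ) : CRb n σ α za θ ν = scaledCR za (√n / σ * ν) (√n / σ * θ) := by
  have hk : 0 < √n / σ := div_pos (by positivity) hσ
  have e : √n / σ * (za * σ / √n) = za := by field_simp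
  have hα : α = 2 * Phi (-za) := by linarith
  conv_rhs => rw [← e]
  simp only [CRb, scaledCR, ← mul_sub, ← mul_add, abs_mul, abs_of_pos hk,
    mul_lt_mul_iff_right₀ hk, mul_le_mul_iff_right₀ hk, Ps_eq_scaledPs]
  rw [e, div_mul_eq_mul_div (√(n : ℝ)) σ (ν - θ), hα, Phi_neg za]
  ring_nf

lemma div_sigTilde_eq_halfWidth (hσ : σ ≠ 0) {lam : ℝ} (hlam : 0 ≤ lam) {k : ℝ}
    (hk : k ≠ 0) (a θ : ℝ) : a * sigTilde lam σ θ / σ = halfWidth a (k * √lam) (k * θ) := by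
  by_cases hθ : θ = 0
  · simp [sigTilde, halfWidth, hθ]
  · have : θ ^ 2 + lam ≠ 0 := by positivity
    rw [sigTilde, if_neg hθ, halfWidth, mul_pow, mul_pow, Real.sq_sqrt hlam]
    field_simp

lemma Delta_eq_scaledDelta (hn : 0 < n) (hσ : 0 < σ) {lam α za : ℝ} (hlam : 0 ≤ lam)
    (hza : Phi (-za) = α / 2) (zt θ : ℝ) :
    Delta n σ lam α za zt θ = scaledDelta za zt (√n / σ * √lam)
      (halfWidth za (√n / σ * √lam) (√n / σ * θ)) (√n / σ * θ) := by
  have hk : √n / σ ≠ 0 := (div_pos (by positivity) hσ).ne'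
  have e₁ : √n / σ * (zt * σ / √n) = zt := by field_simp
  have e₂ : √n / σ * (√lam + za * σ / √n) = √n / σ * √lam + za := by field_simp
  simp only [Delta, CRtwo, CR1, scaledDelta, CRa_eq_scaledCR hn hσ, CRb_eq_scaledCR hn hσ hza,
    Ps_eq_scaledPs, e₁, e₂, div_sigTilde_eq_halfWidth hσ.ne' hlam hk]

lemma add_halfWidth_eq_of_eq_sub_sigTilde (hn : 0 < n) (hσ : 0 < σ) {lam za c : ℝ}
    (hlam : 0 ≤ lam) (hc : c = √lam - za * sigTilde lam σ c / √n) :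
    √n / σ * c + halfWidth za (√n / σ * √lam) (√n / σ * c) = √n / σ * √lam := by
  have e : √n / σ * (za * sigTilde lam σ c / √n) = za * sigTilde lam σ c / σ := by
    field_simp
  rw [← div_sigTilde_eq_halfWidth hσ.ne' hlam (div_pos (by positivity) hσ).ne', ← e,
    ← mul_add]
  exact congrArg _ (by linarith)

end bridge

section bounds

variable {a b g r v x : ℝ}

theorem one_sub_div_le_scaledDelta (hb : 0 < b) (hba : b ≤ a) (hg : 0 ≤ g) (hv : 0 ≤ v)
    (hvab : v ≤ a + b) (hvr : v + g ≤ r) :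
    1 - Phi (-a) / Phi (-b) ≤ scaledDelta a b r g v := by
  rw [scaledDelta, scaledCR_eq_zero hg hv hvr, scaledCR_eq_zero (ν := r + a) hg hv (by linarith),
    scaledCR_eq_zero (ν := r + a) (by linarith) hv (by linarith), add_zero, sub_zero, zero_div,
    sub_zero]
  have hPs : 0 < scaledPs v b := scaledPs_pos
  have hB : 0 < Phi (-b) := Phi_pos _
  have hAB : Phi (-a) ≤ Phi (-b) := Phi_mono (by linarith)
  rcases lt_or_ge v (a - b) with hv' | hv'
  · rw [scaledCR_of_lt_sub hv hv']
    calc 1 - Phi (-a) / Phi (-b) = 1 - 2 * Phi (-a) / (2 * Phi (-b)) := by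
          rw [mul_div_mul_left _ _ two_ne_zero]
      _ ≤ 1 - 2 * Phi (-a) / scaledPs v b := by
          gcongr
          · exact mul_nonneg zero_le_two (Phi_nonneg _)
          · exact two_mul_Phi_neg_le_scaledPs hv hb.le
      _ = (scaledPs v b - 2 * Phi (-a)) / scaledPs v b := by field_simp
  · rw [scaledCR_of_sub_le (by linarith) (by linarith), clampedCR, min_eq_left (by linarith),
      max_eq_right (by linarith)]
    have hp : 2 * Phi (-b) - Phi (-a) ≤ Phi (v - b) :=
      (two_mul_Phi_neg_sub_le hb.le hba).trans (Phi_mono (by linarith))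
    have hq : Phi (-v - b) ≤ Phi (-a) := Phi_mono (by linarith)
    have hbv : Phi (b - v) = 1 - Phi (v - b) := by rw [← Phi_neg, neg_sub]
    rw [one_sub_div hB.ne', div_le_div_iff₀ hB hPs, scaledPs]
    nlinarith [Phi_neg a, Phi_nonneg (-v - b), mul_le_mul_of_nonneg_left hp (Phi_nonneg (-a)),
      mul_le_mul_of_nonneg_left hq (sub_nonneg.2 hAB)]

lemma scaledCR_div_scaledPs_le (hg : 0 ≤ g) (hgv : g - r ≤ v) (hvr : v ≤ r)
    (hrv : r ≤ v + g) : scaledCR g r v / scaledPs v r ≤ 2 * Phi g - 1 := by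
  rw [scaledCR_of_sub_le hg hgv, clampedCR, min_eq_left (by linarith),
    max_eq_right (by linarith)]
  have hu : Phi (r - v) = 1 - Phi (v - r) := by rw [← Phi_neg, neg_sub]
  have hu0 : 0 < Phi (v - r) := Phi_pos _
  have hu1 : Phi (v - r) ≤ 1 / 2 := Phi_zero ▸ Phi_mono (by linarith)
  have hN : 0 ≤ Phi g - Phi (r - v) := sub_nonneg.2 (Phi_mono (by linarith))
  calc _ ≤ (Phi g - Phi (r - v)) / Phi (v - r) := by
        refine div_le_div_of_nonneg_left hN hu0 ?_
        rw [scaledPs]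
        linarith [Phi_nonneg (-v - r)]
    _ ≤ 2 * Phi g - 1 := by
        rw [div_le_iff₀ hu0, hu]
        nlinarith [mul_nonneg (sub_nonneg.2 (Phi_le_one g))
          (show 0 ≤ 1 - 2 * Phi (v - r) by linarith)]

theorem Phi_neg_half_sub_le_scaledDelta (ha : 0 ≤ a) (hb : 0 ≤ b) (hab : a ≤ 2 * b)
    (hr : a + b ≤ r) (hg : 0 ≤ g) (hga : g ≤ a / 2) (hv : 0 ≤ v) (hvr : v ≤ r)
    (hcase : a + b ≤ v ∨ r ≤ v + g) :
    Phi (-(a / 2)) - Phi (-a) ≤ scaledDelta a b r g v := by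
  rw [scaledDelta, scaledCR_eq_zero (ν := r + a) hg hv (by linarith),
    scaledCR_eq_zero (ν := r + a) ha hv (by linarith), add_zero, sub_zero,
    scaledCR_of_sub_le ha (by rcases hcase with h | h <;> linarith)]
  have hC := le_div_self (clampedCR_nonneg ha (b - v)) scaledPs_pos (scaledPs_le_one (v := v) hb)
  have hhalf : Phi (-(a / 2)) ≤ 1 / 2 := Phi_zero ▸ Phi_mono (by linarith)
  rw [clampedCR] at hC ⊢
  rcases le_or_gt r (v + g) with hrg | hrg
  · have hc : max (-a) (min (b - v) a) ≤ -g :=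
      max_le (by linarith) ((min_le_left _ _).trans (by linarith))
    linarith [scaledCR_div_scaledPs_le hg (by linarith) hvr hrg, Phi_mono hc, Phi_neg a,
      Phi_neg g, Phi_mono (show -(a / 2) ≤ -g by linarith)]
  · have hvab : a + b ≤ v := hcase.resolve_right (not_le.2 hrg)
    have hc : max (-a) (min (b - v) a) = -a :=
      max_eq_left (by rw [min_eq_left (by linarith)]; linarith)
    rw [scaledCR_eq_zero hg hv hrg.le, zero_div, sub_zero]
    rw [hc] at hC ⊢
    linarith [Phi_neg a, Phi_mono (show -a ≤ -(a / 2) by linarith)]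

lemma Phi_neg_lt_add_clampedCR_sub (hg : 0 < g) (hga : g ≤ a) :
    Phi (-a) < Phi a + clampedCR g x - clampedCR a x := by
  simp only [clampedCR]
  rcases le_or_gt (-g) x with hx | hx
  · have : max (-g) (min x g) ≤ max (-a) (min x a) :=
      max_le (le_max_of_le_right (le_min hx (by linarith)))
        (le_max_of_le_right (min_le_min_left _ hga))
    linarith [Phi_mono this, Phi_strictMono (show -a < g by linarith)]
  · rw [max_eq_left ((min_le_left _ _).trans hx.le)]
    linarith [Phi_strictMono (show -g < g by linarith), Phi_mono (le_max_left (-a) (min x a))]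

lemma clampedCR_sub_le_mul (hg : 0 < g) (hga : g ≤ a) (hx : x ≤ a) :
    clampedCR g (x - a) ≤ Phi (a - x) * (Phi a + clampedCR g x - clampedCR a x) := by
  simp only [clampedCR]
  rw [min_eq_left (show x - a ≤ g by linarith)]
  set u := Phi (a - x)
  have hu : Phi (x - a) = 1 - u := by rw [← Phi_neg, neg_sub]
  have hu0 : 0 < u := Phi_pos _
  have hu1 : u ≤ 1 := Phi_le_one _
  have hcc (hx' : -g ≤ x) : Phi (max (-g) (min x g)) ≤ Phi (max (-a) (min x a)) :=
    Phi_mono (max_le (le_max_of_le_right (le_min hx' (by linarith)))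
      (le_max_of_le_right (min_le_min_left _ hga)))
  rcases le_or_gt (-g) (x - a) with h₁ | h₁
  · rw [max_eq_right h₁, hu]
    nlinarith [mul_nonneg hu0.le (sub_nonneg.2 (hcc (by linarith))),
      mul_nonneg (sub_nonneg.2 hu1) (sub_nonneg.2 (Phi_le_one g))]
  rw [max_eq_left h₁.le]
  have hgu : Phi g ≤ u := Phi_mono (by linarith)
  rcases le_or_gt (-g) x with h₂ | h₂
  · nlinarith [mul_nonneg hu0.le (sub_nonneg.2 (hcc h₂)), Phi_neg g,
      mul_le_mul_of_nonneg_right hgu (Phi_nonneg g), sq_nonneg (Phi g - 1)]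
  · rw [max_eq_left ((min_le_left _ _).trans h₂.le)]
    have hca : 1 - u ≤ Phi (max (-a) (min x a)) :=
      hu ▸ Phi_mono (le_max_of_le_right (le_min (by linarith) (by linarith)))
    nlinarith [mul_le_mul_of_nonneg_left hca hu0.le, mul_nonneg (sub_nonneg.2 hu1)
      (show 0 ≤ u - (Phi g - Phi (-g)) by linarith [Phi_nonneg (-g)])]

theorem neg_Phi_neg_lt_scaledDelta (hb : 0 < b) (hg : 0 < g) (hga : g ≤ a) (hr : a + b ≤ r)
    (hrv : r ≤ v) : -Phi (-a) < scaledDelta a b r g v := by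
  have ha : 0 ≤ a := hg.le.trans hga
  have hC : scaledCR a b v = Phi a - Phi (-a) := by
    rw [scaledCR_of_sub_le ha (by linarith), clampedCR, min_eq_left (by linarith),
      max_eq_left (by linarith)]
  rw [scaledDelta, hC, scaledCR_of_sub_le (ν := r + a) hg.le (by linarith),
    scaledCR_of_sub_le (ν := r + a) ha (by linarith),
    scaledCR_of_sub_le (ν := r) hg.le (by linarith), show r - v = r + a - v - a by ring]
  have hN := Phi_neg_lt_add_clampedCR_sub (x := r + a - v) hg hga
  have hkey := clampedCR_sub_le_mul hg hga (show r + a - v ≤ a by linarith)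
  rw [show a - (r + a - v) = v - r by ring] at hkey
  have hu0 : 0 < Phi (v - r) := Phi_pos _
  have hq : Phi (v - r) ≤ scaledPs v r := by
    rw [scaledPs]
    linarith [Phi_nonneg (-v - r)]
  set N := Phi a - Phi (-a) + clampedCR g (r + a - v) - clampedCR a (r + a - v)
  have h₁ : N < N / scaledPs v b :=
    (lt_div_iff₀ scaledPs_pos).2 (mul_lt_of_lt_one_right (by linarith) (scaledPs_lt_one hb))
  have h₂ := div_le_div_of_nonneg_left (clampedCR_nonneg hg.le (r + a - v - a)) hu0 hq
  have h₃ := (div_le_iff₀' hu0).2 hkey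
  linarith

end bounds

section withHalfWidth

variable {a b r w v : ℝ}

theorem one_sub_div_le_scaledDelta_halfWidth (hb : 0 < b) (hba : b ≤ a) (hr : r ≠ 0)
    (hw : w + halfWidth a r w = r) (hv : v ∈ Icc 0 (min (a + b) w)) :
    1 - Phi (-a) / Phi (-b) ≤ scaledDelta a b r (halfWidth a r v) v := by
  have ha : 0 ≤ a := hb.le.trans hba
  obtain ⟨hv0, hvab, hvw⟩ := And.imp_right le_min_iff.1 hv
  exact one_sub_div_le_scaledDelta hb hba (halfWidth_nonneg ha) hv0 hvab
    ((add_halfWidth_monotoneOn ha hr hv0 (hv0.trans hvw) hvw).trans_eq hw)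

theorem Phi_neg_half_sub_le_scaledDelta_halfWidth (ha : 0 ≤ a) (hb : 0 < b) (hab : a ≤ 2 * b)
    (hr : a + b ≤ r) (hw0 : 0 ≤ w) (hw : w + halfWidth a r w = r)
    (hv : v ∈ Icc (min (a + b) w) r) :
    Phi (-(a / 2)) - Phi (-a) ≤ scaledDelta a b r (halfWidth a r v) v := by
  obtain ⟨hv, hvr⟩ := hv
  have hv0 : 0 ≤ v := (le_min (by linarith) hw0).trans hv
  refine Phi_neg_half_sub_le_scaledDelta ha hb.le hab hr (halfWidth_nonneg ha)
    (halfWidth_le_half ha hv0 hvr) hv0 hvr ((min_le_iff.1 hv).imp_right fun hwv => ?_)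
  exact hw.symm.trans_le (add_halfWidth_monotoneOn ha (by linarith) hw0 hv0 hwv)

end withHalfWidth

lemma quantile_bounds {α τ za zt : ℝ} (hτ : τ < 1) (hza : Phi (-za) = α / 2)
    (hzt : Phi (-zt) = τ / 2) (hC1 : α ≤ τ) (hC2 : τ < 2 * Phi (-(za / 2)) - α) :
    0 < zt ∧ zt ≤ za ∧ za ≤ 2 * zt := by
  have hzt0 : Phi (-zt) < Phi 0 := by rw [Phi_zero]; linarith
  have hba : Phi (-za) ≤ Phi (-zt) := by linarith
  have hab : Phi (-zt) < Phi (-(za / 2)) := by linarith [Phi_pos (-za)]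
  refine ⟨?_, ?_, ?_⟩
  · linarith [Phi_strictMono.lt_iff_lt.1 hzt0]
  · linarith [Phi_strictMono.le_iff_le.1 hba]
  · linarith [Phi_strictMono.lt_iff_lt.1 hab]

theorem theorem2_general (n : ℕ) (hn : 1 ≤ n) (σ lam α τ za zt : ℝ)
    (hσ : 0 < σ) (hlam : 0 < lam)
    (hτ : τ ∈ Set.Ioo (0:ℝ) 1)
    (hza : Phi (-za) = α / 2) (hzt : Phi (-zt) = τ / 2)
    (hC1 : α ≤ τ) (hC2 : τ < 2 * Phi (-(za / 2)) - α)
    (hlamLB : (za + zt) * σ / Real.sqrt n ≤ Real.sqrt lam)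
    (c₁ : ℝ) (hc₁pos : 0 < c₁)
    (hc₁ : c₁ = Real.sqrt lam - za * sigTilde lam σ c₁ / Real.sqrt n) :
    (∀ θ ∈ Set.Icc (0:ℝ) (min ((za + zt) * σ / Real.sqrt n) c₁),
      1 - α / τ ≤ Delta n σ lam α za zt θ) ∧
    (∀ θ ∈ Set.Icc (min ((za + zt) * σ / Real.sqrt n) c₁) (Real.sqrt lam),
      Phi (-(za / 2)) - α / 2 ≤ Delta n σ lam α za zt θ) ∧
    0 < Phi (-(za / 2)) - α / 2 ∧
    (∀ θ ∈ Set.Ici (Real.sqrt lam), -(α / 2) < Delta n σ lam α za zt θ) := by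
  obtain ⟨hzt0, hba, hab⟩ := quantile_bounds hτ.2 hza hzt hC1 hC2
  have hza0 : 0 < za := hzt0.trans_le hba
  set k := √n / σ with hk_def
  have hk : 0 < k := div_pos (Real.sqrt_pos.2 (by exact_mod_cast hn)) hσ
  set r := k * √lam
  have hν₃ : k * ((za + zt) * σ / √n) = za + zt := by rw [hk_def]; field_simp
  have hr : za + zt ≤ r := hν₃ ▸ mul_le_mul_of_nonneg_left hlamLB hk.le
  have hw := add_halfWidth_eq_of_eq_sub_sigTilde hn hσ hlam.le hc₁
  have hΔ (θ : ℝ) : Delta n σ lam α za zt θ =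
      scaledDelta za zt r (halfWidth za r (k * θ)) (k * θ) :=
    Delta_eq_scaledDelta hn hσ hlam.le hza zt θ
  have hIcc {x y θ : ℝ} (h : θ ∈ Icc x y) : k * θ ∈ Icc (k * x) (k * y) :=
    ⟨mul_le_mul_of_nonneg_left h.1 hk.le, mul_le_mul_of_nonneg_left h.2 hk.le⟩
  have hmin : k * min ((za + zt) * σ / √n) c₁ = min (za + zt) (k * c₁) := by
    rw [mul_min_of_nonneg _ _ hk.le, hν₃]
  refine ⟨fun θ hθ => ?_, fun θ hθ => ?_, by linarith [hτ.1], fun θ hθ => ?_⟩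
  · have h := one_sub_div_le_scaledDelta_halfWidth hzt0 hba (by positivity) hw
      (by simpa only [mul_zero, hmin] using hIcc hθ)
    rwa [hza, hzt, div_div_div_cancel_right₀ two_ne_zero, ← hΔ] at h
  · have h := Phi_neg_half_sub_le_scaledDelta_halfWidth hza0.le hzt0 hab hr
      (mul_pos hk hc₁pos).le hw (hmin ▸ hIcc hθ)
    rw [hΔ]
    linarith
  · have hv : r ≤ k * θ := mul_le_mul_of_nonneg_left hθ hk.le
    have h := neg_Phi_neg_lt_scaledDelta hzt0
      (halfWidth_pos (r := r) hza0 (show 0 < k * θ by linarith).ne') (halfWidth_le hza0.le) hr hv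
    rw [hΔ]
    linarith

/-- Theorem 2: under (C1), (C2) and √λ ≥ (z_{α/2} + z_{τ/2})σ/√n,
setting ν₀ = √λ and ν₃ = (z_{α/2} + z_{τ/2})σ/√n:
(a) Δ(θ) ≥ 1 − α/τ on [0, min{ν₃, c₁}];
(b) Δ(θ) ≥ Φ(−z_{α/2}/2) − α/2 > 0 on [min{ν₃, c₁}, ν₀];
(c) Δ(θ) > −α/2 on [ν₀, ∞). -/
theorem theorem2 (n : ℕ) (hn : 1 ≤ n) (σ lam α τ za zt : ℝ)
    (hσ : 0 < σ) (hlam : 0 < lam)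
    (hα : α ∈ Set.Ioo (0:ℝ) 1) (hτ : τ ∈ Set.Ioo (0:ℝ) 1)
    (hza : Phi (-za) = α / 2) (hzt : Phi (-zt) = τ / 2)
    (hC1 : α ≤ τ) (hC2 : τ < 2 * Phi (-(za / 2)) - α)
    (hlamLB : (za + zt) * σ / Real.sqrt n ≤ Real.sqrt lam)
    (c₁ : ℝ) (hc₁pos : 0 < c₁)
    (hc₁ : c₁ = Real.sqrt lam - za * sigTilde lam σ c₁ / Real.sqrt n) :
    (∀ θ ∈ Set.Icc (0:ℝ) (min ((za + zt) * σ / Real.sqrt n) c₁),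
      1 - α / τ ≤ Delta n σ lam α za zt θ) ∧
    (∀ θ ∈ Set.Icc (min ((za + zt) * σ / Real.sqrt n) c₁) (Real.sqrt lam),
      Phi (-(za / 2)) - α / 2 ≤ Delta n σ lam α za zt θ) ∧
    0 < Phi (-(za / 2)) - α / 2 ∧
    (∀ θ ∈ Set.Ici (Real.sqrt lam), -(α / 2) < Delta n σ lam α za zt θ) :=
  theorem2_general n hn σ lam α τ za zt hσ hlam hτ hza hzt hC1 hC2 hlamLB c₁ hc₁pos hc₁
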